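/- For every nonnegative integer n, the Gegenbauer polynomials satisfy C_{2n+1}^{(3/2)}(z/2) = (4n+5 − 1/(4n+5)) · [C_{2n+1}^{(1/2)}(z/2) − C_{2n+3}^{(1/2)}(z/2)] / (4 − z²) as an identity of polynomials (rational functions) in z. -/
import Mathlib


open Finset Real

/-- The Gegenbauer (ultraspherical) polynomial `C_m^{(α)}`, via its explicit
expansion `C_m^{(α)}(x) = ∑_{k=0}^{⌊m/2⌋} (-1)^k Γ(m-k+α)/(Γ(α) k! (m-2k)!) (2x)^{m-2k}`. -/
noncomputable def geg (α : ℝ) (m : ℕ) (x : ℝ) : ℝ :=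
  ∑ k ∈ Finset.range (m / 2 + 1),
    (-1) ^ k * Real.Gamma ((m : ℝ) - k + α) /
      (Real.Gamma α * (Nat.factorial k) * (Nat.factorial (m - 2 * k))) *
        (2 * x) ^ (m - 2 * k)

/-- Auxiliary: the coefficient of `z^(2(n-k)+1)` in `geg α (2n+1) (z/2)`. -/
noncomputable def co (α : ℝ) (n k : ℕ) : ℝ :=
  (-1) ^ k * Real.Gamma (2 * (n : ℝ) + 1 - k + α) /
    (Real.Gamma α * (Nat.factorial k) * (Nat.factorial (2 * (n - k) + 1)))

lemma gamma_half : Real.Gamma (3/2) = (1/2) * Real.Gamma (1/2) := by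
  rw [show (3/2 : ℝ) = 1/2 + 1 by norm_num, Real.Gamma_add_one (by norm_num)]

lemma fact_cast (m : ℕ) : ((m + 2).factorial : ℝ) = ((m:ℝ)+2) * ((m:ℝ)+1) * (m.factorial : ℝ) := by
  rw [Nat.factorial_succ, Nat.factorial_succ]; push_cast; ring

lemma fact_cast1 (m : ℕ) : ((m + 1).factorial : ℝ) = ((m:ℝ)+1) * (m.factorial : ℝ) := by
  rw [Nat.factorial_succ]; push_cast; ring

lemma geg_odd (α : ℝ) (n : ℕ) (z : ℝ) :
    geg α (2 * n + 1) (z / 2) = ∑ k ∈ Finset.range (n + 1), co α n k * z ^ (2 * (n - k) + 1) := by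
  unfold geg co
  rw [show (2 * n + 1) / 2 + 1 = n + 1 by omega]
  refine Finset.sum_congr rfl fun k hk => ?_
  have hk' : k ≤ n := by simpa using Nat.lt_succ_iff.mp (Finset.mem_range.mp hk)
  have h1 : 2 * n + 1 - 2 * k = 2 * (n - k) + 1 := by omega
  have h2 : (2 : ℝ) * (z / 2) = z := by ring
  rw [h1, h2]
  push_cast
  ring_nf

lemma key0 (n : ℕ) :
    (0 : ℝ) - co (3/2) n 0 =
      (4 * (n : ℝ) + 5 - 1 / (4 * (n : ℝ) + 5)) * (0 - co (1/2) (n+1) 0) := by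
  unfold co
  have hx : (2 * (n:ℝ) + 5/2) ≠ 0 := by positivity
  have h1 : 2 * (n : ℝ) + 1 - (0:ℕ) + 3/2 = 2 * (n:ℝ) + 5/2 := by push_cast; ring
  have h2 : 2 * ((n+1 : ℕ) : ℝ) + 1 - (0:ℕ) + 1/2 = (2 * (n:ℝ) + 5/2) + 1 := by push_cast; ring
  rw [h1, h2, Real.Gamma_add_one hx, gamma_half]
  have h3 : 2 * ((n:ℕ) + 1 - 0) + 1 = (2*n+1) + 2 := by omega
  have h4 : 2 * ((n:ℕ) - 0) + 1 = 2*n+1 := by omega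
  rw [h3, h4, fact_cast]
  have hG : Real.Gamma (2 * (n:ℝ) + 5/2) ≠ 0 :=
    ne_of_gt (Real.Gamma_pos_of_pos (by positivity))
  have hG2 : Real.Gamma (1/2) ≠ 0 := ne_of_gt (Real.Gamma_pos_of_pos (by norm_num))
  have hf : ((2*n+1).factorial : ℝ) ≠ 0 := by exact_mod_cast (2*n+1).factorial_ne_zero
  have hN : (4 * (n:ℝ) + 5) ≠ 0 := by positivity
  push_cast
  field_simp
  ring

lemma keytop (n : ℕ) :
    4 * co (3/2) n n - 0 =
      (4 * (n : ℝ) + 5 - 1 / (4 * (n : ℝ) + 5)) * (co (1/2) n n - co (1/2) (n+1) (n+1)) := by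
  unfold co
  have hx : ((n:ℝ) + 3/2) ≠ 0 := by positivity
  have h1 : 2 * (n : ℝ) + 1 - (n:ℕ) + 3/2 = ((n:ℝ) + 3/2) + 1 := by push_cast; ring
  have h2 : 2 * (n : ℝ) + 1 - (n:ℕ) + 1/2 = (n:ℝ) + 3/2 := by ring
  have h3 : 2 * ((n+1 : ℕ) : ℝ) + 1 - ((n+1 : ℕ) : ℝ) + 1/2 = ((n:ℝ) + 3/2) + 1 := by
    push_cast; ring
  rw [h1, h2, h3, Real.Gamma_add_one hx, gamma_half]
  have h4 : 2 * ((n:ℕ) - n) + 1 = 1 := by omega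
  have h5 : 2 * ((n+1:ℕ) - (n+1)) + 1 = 1 := by omega
  rw [h4, h5, Nat.factorial_one, Nat.factorial_succ]
  have hG : Real.Gamma ((n:ℝ) + 3/2) ≠ 0 := ne_of_gt (Real.Gamma_pos_of_pos (by positivity))
  have hG2 : Real.Gamma (1/2) ≠ 0 := ne_of_gt (Real.Gamma_pos_of_pos (by norm_num))
  have hf : ((n).factorial : ℝ) ≠ 0 := by exact_mod_cast (n).factorial_ne_zero
  have hN : (4 * (n:ℝ) + 5) ≠ 0 := by positivity
  push_cast
  field_simp
  ring

set_option maxHeartbeats 1600000 in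
lemma keymid (i p : ℕ) :
    4 * co (3/2) (i+1+p) i - co (3/2) (i+1+p) (i+1) =
      (4 * ((i+1+p : ℕ) : ℝ) + 5 - 1 / (4 * ((i+1+p : ℕ) : ℝ) + 5)) *
        (co (1/2) (i+1+p) i - co (1/2) (i+1+p+1) (i+1)) := by
  unfold co
  have hx : ((i:ℝ) + 2*p + 7/2) ≠ 0 := by positivity
  have h1 : 2 * ((i+1+p : ℕ) : ℝ) + 1 - (i:ℕ) + 3/2 = ((i:ℝ) + 2*p + 7/2) + 1 := by
    push_cast; ring
  have h2 : 2 * ((i+1+p : ℕ) : ℝ) + 1 - ((i+1:ℕ):ℝ) + 3/2 = (i:ℝ) + 2*p + 7/2 := by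
    push_cast; ring
  have h3 : 2 * ((i+1+p : ℕ) : ℝ) + 1 - (i:ℕ) + 1/2 = (i:ℝ) + 2*p + 7/2 := by
    push_cast; ring
  have h4 : 2 * ((i+1+p+1 : ℕ) : ℝ) + 1 - ((i+1:ℕ):ℝ) + 1/2 = ((i:ℝ) + 2*p + 7/2) + 1 := by
    push_cast; ring
  rw [h1, h2, h3, h4, Real.Gamma_add_one hx, gamma_half]
  have h5 : 2 * ((i+1+p:ℕ) - i) + 1 = (2*p+1) + 2 := by omega
  have h6 : 2 * ((i+1+p:ℕ) - (i+1)) + 1 = 2*p+1 := by omega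
  have h7 : 2 * ((i+1+p+1:ℕ) - (i+1)) + 1 = (2*p+1) + 2 := by omega
  rw [h5, h6, h7, fact_cast, fact_cast1 i, pow_succ]
  have hG : Real.Gamma ((i:ℝ) + 2*p + 7/2) ≠ 0 := ne_of_gt (Real.Gamma_pos_of_pos (by positivity))
  have hG2 : Real.Gamma (1/2) ≠ 0 := ne_of_gt (Real.Gamma_pos_of_pos (by norm_num))
  have hf1 : ((i).factorial : ℝ) ≠ 0 := by exact_mod_cast (i).factorial_ne_zero
  have hf2 : (((2*p+1)).factorial : ℝ) ≠ 0 := by exact_mod_cast ((2*p+1)).factorial_ne_zero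
  have hN : (4 * ((i+1+p:ℕ):ℝ) + 5) ≠ 0 := by positivity
  push_cast
  field_simp
  ring

lemma key (n j : ℕ) (hj : j ≤ n + 1) :
    (if j = 0 then (0:ℝ) else 4 * co (3/2) n (j-1)) - (if j ≤ n then co (3/2) n j else 0)
      = (4 * (n : ℝ) + 5 - 1 / (4 * (n : ℝ) + 5)) *
        ((if j = 0 then 0 else co (1/2) n (j-1)) - co (1/2) (n+1) j) := by
  rcases Nat.eq_zero_or_pos j with rfl | hj0
  · simp only [if_pos rfl, if_pos (Nat.zero_le n)]
    exact key0 n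
  · rcases Nat.lt_or_ge j (n+1) with hlt | hge
    · obtain ⟨i, rfl⟩ : ∃ i, j = i + 1 := ⟨j-1, by omega⟩
      obtain ⟨p, rfl⟩ : ∃ p, n = i + 1 + p := ⟨n - (i+1), by omega⟩
      simp only [if_neg (Nat.succ_ne_zero i), if_pos (show i+1 ≤ i+1+p by omega),
        Nat.succ_sub_one]
      exact keymid i p
    · have hje : j = n + 1 := by omega
      subst hje
      simp only [if_neg (Nat.succ_ne_zero n), if_neg (show ¬ (n+1 ≤ n) by omega),
        Nat.succ_sub_one]
      exact keytop n

theorem geg_three_term (n : ℕ) (z : ℝ) :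
    geg (3/2) (2 * n + 1) (z / 2) * (4 - z ^ 2) =
      (4 * (n : ℝ) + 5 - 1 / (4 * (n : ℝ) + 5)) *
        (geg (1/2) (2 * n + 1) (z / 2) - geg (1/2) (2 * n + 3) (z / 2)) := by
  rw [show 2*n+3 = 2*(n+1)+1 by ring, geg_odd, geg_odd, geg_odd]
  set C : ℝ := 4 * (n : ℝ) + 5 - 1 / (4 * (n : ℝ) + 5) with hC
  have e1 : ∑ j ∈ Finset.range (n+2),
      (if j = 0 then (0:ℝ) else 4 * co (3/2) n (j-1)) * z ^ (2*(n+1-j)+1)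
      = ∑ k ∈ Finset.range (n+1), 4 * co (3/2) n k * z ^ (2*(n-k)+1) := by
    rw [Finset.sum_range_succ']
    simp [Nat.succ_sub_succ]
  have e2 : ∑ j ∈ Finset.range (n+2),
      (if j ≤ n then co (3/2) n j else (0:ℝ)) * z ^ (2*(n+1-j)+1)
      = ∑ j ∈ Finset.range (n+1), co (3/2) n j * z ^ (2*(n+1-j)+1) := by
    rw [Finset.sum_range_succ]
    rw [if_neg (show ¬ (n+1 ≤ n) by omega)]
    rw [zero_mul, add_zero]
    exact Finset.sum_congr rfl fun j hj => by
      rw [if_pos (Nat.lt_succ_iff.mp (Finset.mem_range.mp hj))]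
  have e3 : ∑ j ∈ Finset.range (n+2),
      (if j = 0 then (0:ℝ) else co (1/2) n (j-1)) * z ^ (2*(n+1-j)+1)
      = ∑ k ∈ Finset.range (n+1), co (1/2) n k * z ^ (2*(n-k)+1) := by
    rw [Finset.sum_range_succ']
    simp [Nat.succ_sub_succ]
  calc (∑ k ∈ Finset.range (n+1), co (3/2) n k * z ^ (2*(n-k)+1)) * (4 - z^2)
      = (∑ k ∈ Finset.range (n+1), 4 * co (3/2) n k * z ^ (2*(n-k)+1))
        - ∑ j ∈ Finset.range (n+1), co (3/2) n j * z ^ (2*(n+1-j)+1) := by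
        rw [Finset.sum_mul, ← Finset.sum_sub_distrib]
        refine Finset.sum_congr rfl fun k hk => ?_
        have hk' : k ≤ n := Nat.lt_succ_iff.mp (Finset.mem_range.mp hk)
        rw [show 2*(n+1-k)+1 = (2*(n-k)+1) + 2 by omega, pow_add]
        ring
    _ = ∑ j ∈ Finset.range (n+2),
        ((if j = 0 then (0:ℝ) else 4 * co (3/2) n (j-1)) - (if j ≤ n then co (3/2) n j else 0))
          * z ^ (2*(n+1-j)+1) := by
        rw [← e1, ← e2, ← Finset.sum_sub_distrib]
        exact Finset.sum_congr rfl fun j hj => by ring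
    _ = ∑ j ∈ Finset.range (n+2),
        C * (((if j = 0 then (0:ℝ) else co (1/2) n (j-1)) - co (1/2) (n+1) j)
          * z ^ (2*(n+1-j)+1)) := by
        refine Finset.sum_congr rfl fun j hj => ?_
        have hj' : j ≤ n + 1 := Nat.lt_succ_iff.mp (Finset.mem_range.mp hj)
        rw [← mul_assoc, ← key n j hj']
    _ = C * ((∑ k ∈ Finset.range (n+1), co (1/2) n k * z ^ (2*(n-k)+1))
        - ∑ k ∈ Finset.range (n+2), co (1/2) (n+1) k * z ^ (2*(n+1-k)+1)) := by
        rw [← Finset.mul_sum, ← e3, ← Finset.sum_sub_distrib]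
        exact congrArg _ (Finset.sum_congr rfl fun j hj => by ring)
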